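/- Let l ∈ {K, D, T, K4, KD4, S4}. A modal formula φ is incomplete for l+5 if and only if there exist two flat finite pointed models (M,a) and (M',a') for l+5 such that M,a ⊨ φ, M',a' ⊨ φ, and (M,a) is not bisimilar modulo P(φ) to (M',a'). -/

import Mathlib

/-- Modal formulas in negation normal form, as in the paper:
φ ::= ⊥ | ⊤ | p | ¬p | φ∧φ | φ∨φ | □φ | ◇φ. -/
inductive Form : Type where
  | bot : Form
  | top : Form
  | pos : ℕ → Form
  | npos : ℕ → Form
  | and : Form → Form → Form
  | or : Form → Form → Form
  | box : Form → Form
  | dia : Form → Form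
deriving DecidableEq

namespace Form

/-- Negation, defined as usual (by De Morgan dualities). -/
def neg : Form → Form
  | bot => top
  | top => bot
  | pos p => npos p
  | npos p => pos p
  | and φ ψ => or φ.neg ψ.neg
  | or φ ψ => and φ.neg ψ.neg
  | box φ => dia φ.neg
  | dia φ => box φ.neg

/-- Implication φ → ψ, defined as usual. -/
def imp (φ ψ : Form) : Form := or φ.neg ψ

/-- Bi-implication φ ↔ ψ, defined as usual. -/
def biimp (φ ψ : Form) : Form := and (imp φ ψ) (imp ψ φ)

/-- P(φ): the set of propositional variables occurring in φ. -/
def vars : Form → Finset ℕ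
  | bot => ∅
  | top => ∅
  | pos p => {p}
  | npos p => {p}
  | and φ ψ => φ.vars ∪ ψ.vars
  | or φ ψ => φ.vars ∪ ψ.vars
  | box φ => φ.vars
  | dia φ => φ.vars

/-- Modal depth. -/
def md : Form → ℕ
  | bot => 0
  | top => 0
  | pos _ => 0
  | npos _ => 0
  | and φ ψ => max φ.md ψ.md
  | or φ ψ => max φ.md ψ.md
  | box φ => φ.md + 1
  | dia φ => φ.md + 1

/-- sub(φ): the set of subformulas of φ. -/
def subf : Form → Finset Form
  | bot => {bot}
  | top => {top}
  | pos p => {pos p}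
  | npos p => {npos p}
  | and φ ψ => insert (and φ ψ) (φ.subf ∪ ψ.subf)
  | or φ ψ => insert (or φ ψ) (φ.subf ∪ ψ.subf)
  | box φ => insert (box φ) φ.subf
  | dia φ => insert (dia φ) φ.subf

/-- s̄ub(φ) = sub(φ) ∪ {¬ψ : ψ ∈ sub(φ)}. -/
def subBar (φ : Form) : Finset Form := φ.subf ∪ φ.subf.image neg

/-- □^k φ : k nested boxes. -/
def boxIter : ℕ → Form → Form
  | 0, φ => φ
  | n + 1, φ => box (boxIter n φ)

def isDia : Form → Bool
  | dia _ => true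
  | _ => false

def isBox : Form → Bool
  | box _ => true
  | _ => false

end Form

/-- Big conjunction over a finite set of formulas (⋀∅ = ⊤). -/
noncomputable def bigAnd (s : Finset Form) : Form := s.toList.foldr Form.and Form.top

/-- Big disjunction over a finite set of formulas (⋁∅ = ⊥). -/
noncomputable def bigOr (s : Finset Form) : Form := s.toList.foldr Form.or Form.bot

/-- th(a) = ⋀ a. -/
noncomputable def th (a : Finset Form) : Form := bigAnd a

/-- A finite Kripke model: a nonempty finite set of states, an accessibility
relation and a valuation. -/
structure Model : Type 1 where
  W : Type
  nonempty : Nonempty W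
  finite : Finite W
  R : W → W → Prop
  V : W → Set ℕ

/-- Satisfaction M,w ⊨ φ. -/
def Model.sat (M : Model) : M.W → Form → Prop
  | _, .bot => False
  | _, .top => True
  | w, .pos p => p ∈ M.V w
  | w, .npos p => p ∉ M.V w
  | w, .and φ ψ => M.sat w φ ∧ M.sat w ψ
  | w, .or φ ψ => M.sat w φ ∨ M.sat w ψ
  | w, .box φ => ∀ v, M.R w v → M.sat v φ
  | w, .dia φ => ∃ v, M.R w v ∧ M.sat v φ

/-- The six base logics K, D, T, K4, KD4, S4. -/
inductive BaseLogic : Type where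
  | K | D | T | K4 | KD4 | S4
deriving DecidableEq

/-- A logic: a base logic, possibly extended by axiom 5. -/
structure Logic : Type where
  base : BaseLogic
  has5 : Bool
deriving DecidableEq

def Logic.K : Logic := ⟨.K, false⟩
def Logic.D : Logic := ⟨.D, false⟩
def Logic.T : Logic := ⟨.T, false⟩
def Logic.K4 : Logic := ⟨.K4, false⟩
def Logic.KD4 : Logic := ⟨.KD4, false⟩
def Logic.S4 : Logic := ⟨.S4, false⟩

/-- l + 5. -/
def BaseLogic.plus5 (b : BaseLogic) : Logic := ⟨b, true⟩

/-- M is a model for the logic l (frame conditions). -/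
def Model.IsFor (M : Model) (l : Logic) : Prop :=
  (match l.base with
    | .K => True
    | .D => ∀ w, ∃ v, M.R w v
    | .T => ∀ w, M.R w w
    | .K4 => ∀ a b c, M.R a b → M.R b c → M.R a c
    | .KD4 => (∀ w, ∃ v, M.R w v) ∧ (∀ a b c, M.R a b → M.R b c → M.R a c)
    | .S4 => (∀ w, M.R w w) ∧ (∀ a b c, M.R a b → M.R b c → M.R a c))
  ∧ (l.has5 = true → ∀ a b c, M.R a b → M.R a c → M.R b c)

/-- φ is satisfiable for l: satisfied at some state of some finite model for l. -/
def Satisfiable (l : Logic) (φ : Form) : Prop :=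
  ∃ M : Model, M.IsFor l ∧ ∃ w : M.W, M.sat w φ

/-- φ is valid for l: satisfied at every state of every finite model for l. -/
def Valid (l : Logic) (φ : Form) : Prop :=
  ∀ M : Model, M.IsFor l → ∀ w : M.W, M.sat w φ

/-- φ is complete for l: for every ψ ∈ L(P(φ)), φ→ψ or φ→¬ψ is valid for l. -/
def Complete (l : Logic) (φ : Form) : Prop :=
  ∀ ψ : Form, ψ.vars ⊆ φ.vars → (Valid l (φ.imp ψ) ∨ Valid l (φ.imp ψ.neg))

/-- Z is a bisimulation modulo P from M to M'. -/
def IsBisim (P : Set ℕ) (M M' : Model) (Z : M.W → M'.W → Prop) : Prop :=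
  (∃ s s', Z s s') ∧
  ∀ s s', Z s s' →
    (M.V s ∩ P = M'.V s' ∩ P) ∧
    (∀ t, M.R s t → ∃ t', M'.R s' t' ∧ Z t t') ∧
    (∀ t', M'.R s' t' → ∃ t, M.R s t ∧ Z t t')

/-- (M,a) ∼_P (M',a'). -/
def Bisimilar (P : Set ℕ) (M : Model) (a : M.W) (M' : Model) (a' : M'.W) : Prop :=
  ∃ Z, IsBisim P M M' Z ∧ Z a a'

/-- (M,a) ≡_P (M',a'): the two pointed models satisfy the same formulas of L(P). -/
def EquivP (P : Set ℕ) (M : Model) (a : M.W) (M' : Model) (a' : M'.W) : Prop :=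
  ∀ φ : Form, ↑φ.vars ⊆ P → (M.sat a φ ↔ M'.sat a' φ)

/-- (M,s) is flat (for base logic l, with axiom 5): the carrier is {s}∪W and
R = R1 ∪ R2 with R1 ⊆ {s}×W, R2 an equivalence relation on W, and s ∈ W if
l ∈ {T,S4}. -/
def Flat (l : BaseLogic) (M : Model) (s : M.W) : Prop :=
  ∃ W : Set M.W, (∀ w, w = s ∨ w ∈ W) ∧
    ∃ R1 R2 : M.W → M.W → Prop,
      (∀ x y, M.R x y ↔ (R1 x y ∨ R2 x y)) ∧
      (∀ x y, R1 x y → x = s ∧ y ∈ W) ∧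
      (∀ x y, R2 x y → x ∈ W ∧ y ∈ W) ∧
      (∀ x ∈ W, R2 x x) ∧
      (∀ x y, R2 x y → R2 y x) ∧
      (∀ x y z, R2 x y → R2 y z → R2 x z) ∧
      ((l = .T ∨ l = .S4) → s ∈ W)

/-- A maximal state for l with respect to φ: a maximally l-consistent subset
of s̄ub(φ). -/
def MaxState (l : Logic) (φ : Form) (a : Finset Form) : Prop :=
  a ⊆ φ.subBar ∧ Satisfiable l (th a) ∧ ∀ ψ ∈ φ.subf, ψ ∈ a ∨ ψ.neg ∈ a

/-- D(x) = {◇ψ : ◇ψ ∈ x}. -/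
def DSet (x : Finset Form) : Finset Form := x.filter (fun ψ => ψ.isDia = true)

/-- B(x) = {□ψ : □ψ ∈ x}. -/
def BSet (x : Finset Form) : Finset Form := x.filter (fun ψ => ψ.isBox = true)

/-- A view: a parent-state and a finite set of children-states. -/
structure View : Type where
  parent : Finset Form
  children : Finset (Finset Form)

/-- The view is with respect to φ: all its states are subsets of s̄ub(φ). -/
def View.WF (φ : Form) (S : View) : Prop :=
  S.parent ⊆ φ.subBar ∧ ∀ c ∈ S.children, c ⊆ φ.subBar

/-- A set of formulas is l-closed. -/
def LClosed (l : Logic) (P : Finset ℕ) (s : Finset Form) : Prop :=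
  (∀ φ1 φ2 : Form, Form.and φ1 φ2 ∈ s → φ1 ∈ s ∧ φ2 ∈ s) ∧
  (∀ φ1 φ2 : Form, Form.or φ1 φ2 ∈ s → φ1 ∈ s ∨ φ2 ∈ s) ∧
  ((l.base = .T ∨ l.base = .S4) → ∀ ψ : Form, Form.box ψ ∈ s → ψ ∈ s) ∧
  (∀ p ∈ P, Form.pos p ∈ s ∨ Form.npos p ∈ s)

/-- The view S is l-complete. -/
def ViewLComplete (l : Logic) (P : Finset ℕ) (S : View) : Prop :=
  LClosed l P S.parent ∧
  (∀ c ∈ S.children, LClosed l P c) ∧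
  (∀ ψ : Form, Form.dia ψ ∈ S.parent → ∃ c ∈ S.children, ψ ∈ c) ∧
  (∀ ψ : Form, Form.box ψ ∈ S.parent → ∀ c ∈ S.children, ψ ∈ c) ∧
  ((l.base = .K4 ∨ l.base = .KD4 ∨ l.base = .S4) →
    ∀ ψ : Form, Form.box ψ ∈ S.parent → ∀ c ∈ S.children, Form.box ψ ∈ c) ∧
  (l.base = .KD4 → S.children.Nonempty)

/-- The view S is consistent for l: every one of its states is consistent. -/
def ViewConsistent (l : Logic) (S : View) : Prop :=
  Satisfiable l (th S.parent) ∧ ∀ c ∈ S.children, Satisfiable l (th c)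

/-- d = max{md(th(c')) : c' ∈ C(S)}. -/
noncomputable def childDepth (S : View) : ℕ := S.children.sup (fun c => (th c).md)

/-- A K-maximal child-state: a maximally K-consistent subset of s̄ub_d(φ). -/
def KMaxChild (φ : Form) (d : ℕ) (c : Finset Form) : Prop :=
  c ⊆ φ.subBar.filter (fun ψ => ψ.md ≤ d) ∧
  Satisfiable Logic.K (th c) ∧
  ∀ ψ ∈ φ.subf, ψ.md ≤ d → (ψ ∈ c ∨ ψ.neg ∈ c)

/-- S' completes S (for logic l, with respect to φ). -/
def ViewCompletes (l : Logic) (φ : Form) (S' S : View) : Prop :=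
  ViewLComplete l φ.vars S' ∧
  S.parent ⊆ S'.parent ∧
  (∀ a ∈ S.children, ∃ a' ∈ S'.children, a ⊆ a') ∧
  (l.base = .K → ∀ a' ∈ S'.children, KMaxChild φ (childDepth S') a') ∧
  (l.base ≠ .K → ∀ a' ∈ S'.children, MaxState l φ a')

/-- The depth-0 normal form ⋀_{p∈S} p ∧ ⋀_{p∈P∖S} ¬p. -/
noncomputable def nf0 (P S : Finset ℕ) : Form :=
  Form.and (bigAnd (S.image Form.pos)) (bigAnd ((P \ S).image Form.npos))

/-- Fine's normal forms F_P^d. -/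
noncomputable def NF (P : Finset ℕ) : ℕ → Set Form
  | 0 => { χ | ∃ S ⊆ P, χ = nf0 P S }
  | d + 1 => { χ | ∃ S : Finset Form, ↑S ⊆ NF P d ∧ ∃ S0 ⊆ P,
      χ = Form.and (nf0 P S0)
            (Form.and (bigAnd (S.image Form.dia)) (Form.box (bigOr S))) }

/-- φ is complete up to its depth for l. -/
def CompleteUpToDepth (l : Logic) (φ : Form) : Prop :=
  ∀ ψ : Form, ψ.vars ⊆ φ.vars → ψ.md ≤ φ.md →
    (Valid l (φ.imp ψ) ∨ Valid l (φ.imp ψ.neg))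

/-!
A formula is incomplete exactly when two of its models disagree on some formula over its
variables. On finite models, agreeing on all formulas over P is the same as being bisimilar
modulo P (Hennessy–Milner). In a euclidean model every state with a predecessor is reflexive, and
on such states the accessibility relation is an equivalence; so the submodel generated by a point
is flat, and both models can be replaced by flat ones satisfying the same formulas.
-/

theorem Form.vars_neg (φ : Form) : φ.neg.vars = φ.vars := by
  induction φ <;> simp [Form.neg, Form.vars, *]

theorem Form.vars_bigAnd_subset {P : Set ℕ} {s : Finset Form} (h : ∀ ψ ∈ s, ↑ψ.vars ⊆ P) :
    ↑(bigAnd s).vars ⊆ P := by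
  rw [bigAnd]
  simp_rw [← Finset.mem_toList] at h
  generalize s.toList = L at h ⊢
  induction L with
  | nil => simp [Form.vars]
  | cons ψ L ih => simp_all [Form.vars]

namespace Model

variable (M : Model)

theorem sat_neg (φ : Form) (w : M.W) : M.sat w φ.neg ↔ ¬ M.sat w φ := by
  induction φ generalizing w <;> simp_all [Form.neg, Model.sat, or_iff_not_imp_left]

theorem sat_imp (φ ψ : Form) (w : M.W) : M.sat w (φ.imp ψ) ↔ (M.sat w φ → M.sat w ψ) := by
  rw [Form.imp, Model.sat, sat_neg, imp_iff_not_or]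

theorem sat_bigAnd (s : Finset Form) (w : M.W) : M.sat w (bigAnd s) ↔ ∀ ψ ∈ s, M.sat w ψ := by
  simp_rw [bigAnd, ← Finset.mem_toList]
  induction s.toList with
  | nil => simp [Model.sat]
  | cons ψ L ih => simp [Model.sat, ih]

end Model

theorem not_complete_iff (l : Logic) (φ : Form) :
    ¬ Complete l φ ↔ ∃ (M : Model) (a : M.W) (M' : Model) (a' : M'.W),
      M.IsFor l ∧ M'.IsFor l ∧ M.sat a φ ∧ M'.sat a' φ ∧ ¬ EquivP ↑φ.vars M a M' a' := by
  simp only [Complete, Valid, Model.sat_imp, Model.sat_neg, EquivP, not_forall, not_or,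
    not_iff, not_not, exists_prop, Finset.coe_subset]
  constructor
  · rintro ⟨ψ, hψφ, ⟨M, hM, a, haφ, haψ⟩, ⟨M', hM', a', ha'φ, ha'ψ⟩⟩
    exact ⟨M, a, M', a', hM, hM', haφ, ha'φ, ψ, hψφ, iff_of_true haψ ha'ψ⟩
  · rintro ⟨M, a, M', a', hM, hM', haφ, ha'φ, ψ, hψφ, hψ⟩
    refine ⟨ψ, hψφ, ?_, ?_⟩ <;> by_cases haψ : M.sat a ψ
    · exact ⟨M', hM', a', ha'φ, fun ha'ψ => hψ.2 ha'ψ haψ⟩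
    · exact ⟨M, hM, a, haφ, haψ⟩
    · exact ⟨M, hM, a, haφ, haψ⟩
    · exact ⟨M', hM', a', ha'φ, hψ.1 haψ⟩

section Bisimulation

variable {P : Set ℕ} {M M' M'' : Model} {a : M.W} {a' : M'.W} {a'' : M''.W}

theorem EquivP.symm (h : EquivP P M a M' a') : EquivP P M' a' M a :=
  fun ψ hψ => (h ψ hψ).symm

theorem EquivP.trans (h : EquivP P M a M' a') (h' : EquivP P M' a' M'' a'') :
    EquivP P M a M'' a'' :=
  fun ψ hψ => (h ψ hψ).trans (h' ψ hψ)

theorem exists_sat_not_sat_of_not_equivP (h : ¬ EquivP P M a M' a') :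
    ∃ ψ : Form, ↑ψ.vars ⊆ P ∧ M.sat a ψ ∧ ¬ M'.sat a' ψ := by
  simp only [EquivP, not_forall, exists_prop, not_iff] at h
  obtain ⟨ψ, hψP, hψ⟩ := h
  by_cases haψ : M.sat a ψ
  · exact ⟨ψ, hψP, haψ, hψ.not.1 (not_not.2 haψ)⟩
  · refine ⟨ψ.neg, by rwa [Form.vars_neg], ?_, ?_⟩ <;> simp_all [Model.sat_neg]

theorem IsBisim.sat_iff {Z : M.W → M'.W → Prop} (hZ : IsBisim P M M' Z) (φ : Form)
    (hφ : ↑φ.vars ⊆ P) {w : M.W} {w' : M'.W} (hw : Z w w') : M.sat w φ ↔ M'.sat w' φ := by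
  induction φ generalizing w w' with
  | bot | top => rfl
  | pos p | npos p =>
    have hp : p ∈ P := hφ (by simp [Form.vars])
    have hV := Set.ext_iff.1 (hZ.2 w w' hw).1 p
    simp only [Set.mem_inter_iff, hp, and_true] at hV
    simp [Model.sat, hV]
  | and φ ψ ihφ ihψ | or φ ψ ihφ ihψ =>
    simp only [Form.vars, Finset.coe_union, Set.union_subset_iff] at hφ
    simp only [Model.sat, ihφ hφ.1 hw, ihψ hφ.2 hw]
  | box φ ih =>
    obtain ⟨-, hforth, hback⟩ := hZ.2 w w' hw
    refine ⟨fun h t' ht' => ?_, fun h t ht => ?_⟩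
    · obtain ⟨t, ht, htt'⟩ := hback t' ht'
      exact (ih hφ htt').1 (h t ht)
    · obtain ⟨t', ht', htt'⟩ := hforth t ht
      exact (ih hφ htt').2 (h t' ht')
  | dia φ ih =>
    obtain ⟨-, hforth, hback⟩ := hZ.2 w w' hw
    refine ⟨fun ⟨t, ht, h⟩ => ?_, fun ⟨t', ht', h⟩ => ?_⟩
    · obtain ⟨t', ht', htt'⟩ := hforth t ht
      exact ⟨t', ht', (ih hφ htt').1 h⟩
    · obtain ⟨t, ht, htt'⟩ := hback t' ht'
      exact ⟨t, ht, (ih hφ htt').2 h⟩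

theorem Bisimilar.equivP (h : Bisimilar P M a M' a') : EquivP P M a M' a' :=
  let ⟨_, hZ, haa'⟩ := h
  fun φ hφ => hZ.sat_iff φ hφ haa'

theorem EquivP.exists_succ (h : EquivP P M a M' a') {t : M.W} (ht : M.R a t) :
    ∃ t', M'.R a' t' ∧ EquivP P M t M' t' := by
  by_contra! hne
  have : Fintype M'.W := @Fintype.ofFinite _ M'.finite
  have hsep : ∀ t' : M'.W,
      ∃ ψ : Form, ↑ψ.vars ⊆ P ∧ M.sat t ψ ∧ (M'.R a' t' → ¬ M'.sat t' ψ) := by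
    intro t'
    by_cases ht' : M'.R a' t'
    · obtain ⟨ψ, hψP, htψ, ht'ψ⟩ := exists_sat_not_sat_of_not_equivP (hne t' ht')
      exact ⟨ψ, hψP, htψ, fun _ => ht'ψ⟩
    · exact ⟨.top, by simp [Form.vars], trivial, (absurd · ht')⟩
  choose ψ hψP htψ ht'ψ using hsep
  have hχP : ↑(bigAnd (Finset.univ.image ψ)).vars ⊆ P :=
    Form.vars_bigAnd_subset (by simpa using hψP)
  have hχt : M.sat t (bigAnd (Finset.univ.image ψ)) := (M.sat_bigAnd _ t).2 (by simpa using htψ)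
  obtain ⟨t', ht', hχt'⟩ := (h (.dia _) hχP).1 ⟨t, ht, hχt⟩
  exact ht'ψ t' ht' ((M'.sat_bigAnd _ t').1 hχt' (ψ t') (by simp))

theorem EquivP.bisimilar (h : EquivP P M a M' a') : Bisimilar P M a M' a' := by
  refine ⟨fun w w' => EquivP P M w M' w', ⟨⟨a, a', h⟩, fun w w' hw => ⟨?_, ?_, ?_⟩⟩, h⟩
  · ext p
    simp only [Set.mem_inter_iff, and_congr_left_iff]
    exact fun hp => hw (.pos p) (by simpa [Form.vars] using hp)
  · exact fun t ht => hw.exists_succ ht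
  · intro t' ht'
    obtain ⟨t, ht, htt'⟩ := hw.symm.exists_succ ht'
    exact ⟨t, ht, htt'.symm⟩

end Bisimulation

def Model.generated (M : Model) (a : M.W) : Model where
  W := {w // Relation.ReflTransGen M.R a w}
  nonempty := ⟨⟨a, .refl⟩⟩
  finite := @Subtype.finite _ M.finite _
  R x y := M.R x.1 y.1
  V x := M.V x.1

namespace Model.generated

variable {M : Model} {a : M.W}

def root (M : Model) (a : M.W) : (M.generated a).W := ⟨a, .refl⟩

theorem eq_root_or_exists_rel (w : (M.generated a).W) :
    w = root M a ∨ ∃ v, (M.generated a).R v w := by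
  obtain ⟨w, hw⟩ := w
  rcases hw.cases_tail with rfl | ⟨v, hv, hvw⟩
  · exact .inl rfl
  · exact .inr ⟨⟨v, hv⟩, hvw⟩

theorem isFor {l : Logic} (hM : M.IsFor l) : (M.generated a).IsFor l := by
  have serial (h : ∀ w, ∃ v, M.R w v) (x : (M.generated a).W) : ∃ y, (M.generated a).R x y :=
    let ⟨v, hv⟩ := h x.1
    ⟨⟨v, x.2.tail hv⟩, hv⟩
  rcases l with ⟨_ | _ | _ | _ | _ | _, _⟩ <;> obtain ⟨hbase, h5⟩ := hM
  all_goals refine ⟨?_, fun h x y z => h5 h x.1 y.1 z.1⟩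
  exacts [trivial, serial hbase, fun x => hbase x.1, fun x y z => hbase x.1 y.1 z.1,
    ⟨serial hbase.1, fun x y z => hbase.2 x.1 y.1 z.1⟩,
    ⟨fun x => hbase.1 x.1, fun x y z => hbase.2 x.1 y.1 z.1⟩]

theorem bisimilar (P : Set ℕ) : Bisimilar P (M.generated a) (root M a) M a := by
  refine ⟨fun x w => x.1 = w, ⟨⟨root M a, a, rfl⟩, ?_⟩, rfl⟩
  rintro x _ rfl
  exact ⟨rfl, fun t ht => ⟨t.1, ht, rfl⟩, fun t ht => ⟨⟨t, x.2.tail ht⟩, ht, rfl⟩⟩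

end Model.generated

theorem flat_of_euclidean {l : BaseLogic} {M : Model} {s : M.W}
    (heucl : ∀ x y z, M.R x y → M.R x z → M.R y z) (hroot : ∀ w, w = s ∨ ∃ v, M.R v w)
    (hrefl : (l = .T ∨ l = .S4) → M.R s s) : Flat l M s := by
  have hsucc_refl {v w} (h : M.R v w) : M.R w w := heucl v w w h h
  have hsymm {v w x} (hvw : M.R v w) (hwx : M.R w x) : M.R x w :=
    heucl w x w hwx (hsucc_refl hvw)
  refine ⟨{w | ∃ v, M.R v w}, hroot, fun x y => x = s ∧ M.R x y,
    fun x y => (∃ v, M.R v x) ∧ M.R x y, fun x y => ?_, ?_, ?_, ?_, ?_, ?_,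
    fun hl => ⟨s, hrefl hl⟩⟩
  · rcases hroot x with rfl | hx <;> simp [*]
  · rintro x y ⟨rfl, hxy⟩
    exact ⟨rfl, x, hxy⟩
  · rintro x y ⟨hx, hxy⟩
    exact ⟨hx, x, hxy⟩
  · rintro x ⟨v, hvx⟩
    exact ⟨⟨v, hvx⟩, hsucc_refl hvx⟩
  · rintro x y ⟨⟨v, hvx⟩, hxy⟩
    exact ⟨⟨x, hxy⟩, hsymm hvx hxy⟩
  · rintro x y z ⟨⟨v, hvx⟩, hxy⟩ ⟨-, hyz⟩
    exact ⟨⟨v, hvx⟩, heucl y x z (hsymm hvx hxy) hyz⟩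

theorem exists_flat_bisimilar {l : BaseLogic} {M : Model} (hM : M.IsFor l.plus5) (a : M.W) :
    ∃ (N : Model) (s : N.W), N.IsFor l.plus5 ∧ Flat l N s ∧ ∀ P, Bisimilar P N s M a := by
  have hN := Model.generated.isFor (a := a) hM
  refine ⟨M.generated a, _, hN, flat_of_euclidean (hN.2 rfl) Model.generated.eq_root_or_exists_rel
    fun hl => ?_, Model.generated.bisimilar⟩
  rcases hl with rfl | rfl
  exacts [hN.1 _, hN.1.1 _]

/-- φ is incomplete for l+5 iff it has two non-bisimilar
(modulo P(φ)) flat pointed models for l+5. -/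
theorem stmt4 (l : BaseLogic) (φ : Form) :
    ¬ Complete l.plus5 φ ↔
      ∃ (M : Model) (a : M.W) (M' : Model) (a' : M'.W),
        M.IsFor l.plus5 ∧ M'.IsFor l.plus5 ∧
        Flat l M a ∧ Flat l M' a' ∧
        M.sat a φ ∧ M'.sat a' φ ∧
        ¬ Bisimilar ↑φ.vars M a M' a' := by
  rw [not_complete_iff]
  constructor
  · rintro ⟨M, a, M', a', hM, hM', haφ, ha'φ, hne⟩
    obtain ⟨N, s, hN, hs, hNM⟩ := exists_flat_bisimilar hM a
    obtain ⟨N', s', hN', hs', hNM'⟩ := exists_flat_bisimilar hM' a'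
    have hsa := (hNM φ.vars).equivP
    have hs'a' := (hNM' φ.vars).equivP
    exact ⟨N, s, N', s', hN, hN', hs, hs', (hsa φ subset_rfl).2 haφ, (hs'a' φ subset_rfl).2 ha'φ,
      fun h => hne (hsa.symm.trans (h.equivP.trans hs'a'))⟩
  · rintro ⟨M, a, M', a', hM, hM', -, -, haφ, ha'φ, hnb⟩
    exact ⟨M, a, M', a', hM, hM', haφ, ha'φ, fun h => hnb h.bisimilar⟩
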